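/- Let d ≥ 1, Nα ≥ 2, Nβ ≥ 1, N = Nα + Nβ, let X_1,…,X_N ⊆ ℝ^d be open sets, let p ∈ {1,…,Nβ}, and let u_1,…,u_N with u_i : X_i → ℝ satisfy the splitting inequality for the cost c. Fix x_1⁰ ∈ X_1 at which u_1 is differentiable, and define M := { (x_2,…,x_{Nα}, y_1,…,y_{Nβ}) ∈ X_2×…×X_N : u_{Nα+p} is differentiable at y_p and equality holds in the splitting inequality at (x_1⁰, x_2,…,x_{Nα}, y_1,…,y_{Nβ}) }. Then M contains at most one point; that is, if M is nonempty it is a singleton. -/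

import Mathlib

open MeasureTheory RealInnerProductSpace

noncomputable section

/-- The "starred" vector `y* = (-2 y¹, y², …, y^d)`. -/
def ystar {d : ℕ} (hd : 0 < d) (y : EuclideanSpace ℝ (Fin d)) : EuclideanSpace ℝ (Fin d) :=
  y - (3 * y ⟨0, hd⟩) • EuclideanSpace.single (⟨0, hd⟩ : Fin d) (1 : ℝ)

/-- The cost `c(x_1,…,x_Nα,y_1,…,y_Nβ) = ∑_i ∑_j x_i · y_j*`, in block coordinates. -/
def costxy {d Nα Nβ : ℕ} (hd : 0 < d)
    (x : Fin Nα → EuclideanSpace ℝ (Fin d)) (y : Fin Nβ → EuclideanSpace ℝ (Fin d)) : ℝ :=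
  ∑ i : Fin Nα, ∑ j : Fin Nβ, ⟪x i, ystar hd (y j)⟫

/-!
Write `B x y = ⟪x, y*⟫`, so that `c = B (∑ xᵢ) (∑ yⱼ)` for a nondegenerate symmetric bilinear
form `B`. Varying a single coordinate in the splitting inequality shows that at an equality point
`(x, y)` each `xᵢ` maximizes `uᵢ - B · (∑ y)` on the open set `Xᵢ`, so wherever `uᵢ` is
differentiable its derivative is `B · (∑ y)`; symmetrically the derivative of `vⱼ` at `yⱼ` is
`B (∑ x) ·`. On `M` the derivative of `u₁` at the common point `x₁⁰` therefore fixes `∑ y`.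
For two points of `M`, exchanging one coordinate `xᵢ` for `x'ᵢ` keeps equality (both maximize
the same function), and the derivative at the unchanged `y_p` then forces `xᵢ = x'ᵢ`. The same
exchange on the `y`-coordinates, read through the derivative of `u₁` at `x₁⁰`, gives `y = y'`.
-/

open Function Set

theorem Finset.sum_update_add_self {ι M : Type*} [Fintype ι] [DecidableEq ι] [AddCommMonoid M]
    (f : ι → M) (i : ι) (b : M) : ∑ k, update f i b k + f i = ∑ k, f k + b := by
  rw [Finset.sum_update_of_mem (Finset.mem_univ i), ← Finset.sum_erase_add _ _ (Finset.mem_univ i),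
    Finset.sdiff_singleton_eq_erase, add_comm b, add_right_comm]

theorem Finset.apply_eq_of_sum_update_eq {ι M : Type*} [Fintype ι] [DecidableEq ι]
    [AddCommMonoid M] [IsLeftCancelAdd M] {f : ι → M} {i : ι} {b : M}
    (h : ∑ k, update f i b k = ∑ k, f k) : f i = b :=
  add_left_cancel (h ▸ Finset.sum_update_add_self f i b)

theorem fderiv_eq_of_isLocalMax_sub {E : Type*} [NormedAddCommGroup E] [NormedSpace ℝ E]
    {f : E → ℝ} {ℓ : E →L[ℝ] ℝ} {a : E} (hf : DifferentiableAt ℝ f a)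
    (h : IsLocalMax (fun z => f z - ℓ z) a) : fderiv ℝ f a = ℓ := by
  have := h.fderiv_eq_zero
  rwa [fderiv_fun_sub hf ℓ.differentiableAt, ℓ.fderiv, sub_eq_zero] at this

section Splitting

variable {ι κ E : Type*} [Fintype ι] [Fintype κ] [NormedAddCommGroup E] [NormedSpace ℝ E]
  {B : E →L[ℝ] E →L[ℝ] ℝ} {X : ι → Set E} {Y : κ → Set E} {u : ι → E → ℝ} {v : κ → E → ℝ}
  {x x' : ι → E} {y y' : κ → E}

def splittingGap (B : E →L[ℝ] E →L[ℝ] ℝ) (u : ι → E → ℝ) (v : κ → E → ℝ)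
    (x : ι → E) (y : κ → E) : ℝ :=
  B (∑ i, x i) (∑ j, y j) - (∑ i, u i (x i) + ∑ j, v j (y j))

def IsSplitting (B : E →L[ℝ] E →L[ℝ] ℝ) (X : ι → Set E) (Y : κ → Set E)
    (u : ι → E → ℝ) (v : κ → E → ℝ) : Prop :=
  ∀ x ∈ univ.pi X, ∀ y ∈ univ.pi Y, 0 ≤ splittingGap B u v x y

def IsTight (B : E →L[ℝ] E →L[ℝ] ℝ) (X : ι → Set E) (Y : κ → Set E)
    (u : ι → E → ℝ) (v : κ → E → ℝ) (x : ι → E) (y : κ → E) : Prop :=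
  x ∈ univ.pi X ∧ y ∈ univ.pi Y ∧ splittingGap B u v x y = 0

theorem splittingGap_flip : splittingGap B.flip v u y x = splittingGap B u v x y := by
  simp only [splittingGap, ContinuousLinearMap.flip_apply, add_comm]

theorem splittingGap_update_left [DecidableEq ι] (i : ι) (z : E) :
    splittingGap B u v (update x i z) y = splittingGap B u v x y
      + (u i (x i) - B (x i) (∑ j, y j)) - (u i z - B z (∑ j, y j)) := by
  have hsum := congrArg (fun w => B w (∑ j, y j)) (Finset.sum_update_add_self x i z)
  have hval := Finset.sum_update_add_self (fun k => u k (x k)) i (u i z)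
  simp only [map_add, add_apply] at hsum
  simp only [← apply_update (fun k => u k)] at hval
  simp only [splittingGap]
  linarith

theorem IsSplitting.flip (h : IsSplitting B X Y u v) : IsSplitting B.flip Y X v u :=
  fun y hy x hx => by rw [splittingGap_flip]; exact h x hx y hy

theorem IsTight.flip (h : IsTight B X Y u v x y) : IsTight B.flip Y X v u y x :=
  ⟨h.2.1, h.1, splittingGap_flip.trans h.2.2⟩

theorem IsSplitting.isMaxOn_left (h : IsSplitting B X Y u v) (ht : IsTight B X Y u v x y)
    (i : ι) : IsMaxOn (fun z => u i z - B z (∑ j, y j)) (X i) (x i) := by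
  classical
  intro z hz
  have := h _ ((update_mem_pi_iff_of_mem ht.1).2 fun _ => hz) y ht.2.1
  rw [splittingGap_update_left, ht.2.2] at this
  show u i z - B z _ ≤ u i (x i) - B (x i) _
  linarith

theorem IsSplitting.fderiv_left (h : IsSplitting B X Y u v) (ht : IsTight B X Y u v x y)
    {i : ι} (hX : IsOpen (X i)) (hu : DifferentiableAt ℝ (u i) (x i)) :
    fderiv ℝ (u i) (x i) = B.flip (∑ j, y j) :=
  fderiv_eq_of_isLocalMax_sub hu
    ((h.isMaxOn_left ht i).isLocalMax (hX.mem_nhds (ht.1 i (mem_univ i))))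

theorem IsSplitting.fderiv_right (h : IsSplitting B X Y u v) (ht : IsTight B X Y u v x y)
    {j : κ} (hY : IsOpen (Y j)) (hv : DifferentiableAt ℝ (v j) (y j)) :
    fderiv ℝ (v j) (y j) = B (∑ i, x i) :=
  h.flip.fderiv_left ht.flip hY hv

theorem IsSplitting.isTight_update_left [DecidableEq ι] (h : IsSplitting B X Y u v)
    (ht : IsTight B X Y u v x y) (ht' : IsTight B X Y u v x' y')
    (hy : ∑ j, y j = ∑ j, y' j) (i : ι) : IsTight B X Y u v (update x i (x' i)) y := by
  have hx'i := ht'.1 i (mem_univ i)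
  have h₁ : u i (x' i) - B (x' i) _ ≤ u i (x i) - B (x i) _ := h.isMaxOn_left ht i hx'i
  have h₂ : u i (x i) - B (x i) _ ≤ u i (x' i) - B (x' i) _ :=
    h.isMaxOn_left ht' i (ht.1 i (mem_univ i))
  rw [← hy] at h₂
  refine ⟨(update_mem_pi_iff_of_mem ht.1).2 fun _ => hx'i, ht.2.1, ?_⟩
  rw [splittingGap_update_left, ht.2.2]
  linarith

theorem IsSplitting.isTight_update_right [DecidableEq κ] (h : IsSplitting B X Y u v)
    (ht : IsTight B X Y u v x y) (ht' : IsTight B X Y u v x' y')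
    (hx : ∑ i, x i = ∑ i, x' i) (j : κ) : IsTight B X Y u v x (update y j (y' j)) :=
  (h.flip.isTight_update_left ht.flip ht'.flip hx j).flip

theorem IsSplitting.subsingleton_isTight (h : IsSplitting B X Y u v) (hB : Injective B)
    (hB' : Injective B.flip) {i₀ : ι} {j₀ : κ} (hX : IsOpen (X i₀)) (hY : IsOpen (Y j₀))
    {a : E} (ha : DifferentiableAt ℝ (u i₀) a) :
    {q : (ι → E) × (κ → E) | q.1 i₀ = a ∧ IsTight B X Y u v q.1 q.2 ∧
      DifferentiableAt ℝ (v j₀) (q.2 j₀)}.Subsingleton := by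
  classical
  rintro ⟨x, y⟩ ⟨rfl, ht, hv⟩ ⟨x', y'⟩ ⟨hx₀, ht', -⟩
  have hy : ∑ j, y j = ∑ j, y' j := hB' <| by
    rw [← h.fderiv_left ht hX ha, ← hx₀, h.fderiv_left ht' hX (hx₀ ▸ ha)]
  have hx : x = x' := funext fun i => Finset.apply_eq_of_sum_update_eq <| hB <|
    (h.fderiv_right (h.isTight_update_left ht ht' hy i) hY hv).symm.trans (h.fderiv_right ht hY hv)
  subst hx
  have hy' : y = y' := funext fun j => Finset.apply_eq_of_sum_update_eq <| hB' <|
    (h.fderiv_left (h.isTight_update_right ht ht' rfl j) hX ha).symm.trans (h.fderiv_left ht hX ha)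
  rw [hy']

end Splitting

section Ystar

variable {d : ℕ} (hd : 0 < d)

theorem ystar_apply_zero (y : EuclideanSpace ℝ (Fin d)) :
    ystar hd y ⟨0, hd⟩ = -2 * y ⟨0, hd⟩ := by
  simp only [ystar, PiLp.sub_apply, PiLp.smul_apply, PiLp.single_eq_same, smul_eq_mul, mul_one]
  ring

theorem ystar_injective : Injective (ystar hd) := by
  intro a b hab
  have h0 : a ⟨0, hd⟩ = b ⟨0, hd⟩ := by
    have := congrArg (· ⟨0, hd⟩) hab
    simp only [ystar_apply_zero] at this
    linarith
  simpa [ystar, h0] using hab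

theorem inner_ystar (x y : EuclideanSpace ℝ (Fin d)) :
    ⟪x, ystar hd y⟫ = ⟪x, y⟫ - 3 * x ⟨0, hd⟩ * y ⟨0, hd⟩ := by
  simp only [ystar, inner_sub_right, real_inner_smul_right, EuclideanSpace.inner_single_right,
    Real.ringHom_apply, one_mul, sub_right_inj]
  ring

theorem inner_ystar_comm (x y : EuclideanSpace ℝ (Fin d)) :
    ⟪x, ystar hd y⟫ = ⟪y, ystar hd x⟫ := by
  rw [inner_ystar, inner_ystar, real_inner_comm]
  ring

def ystarL : EuclideanSpace ℝ (Fin d) →L[ℝ] EuclideanSpace ℝ (Fin d) :=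
  ContinuousLinearMap.id ℝ _ -
    (3 : ℝ) • (EuclideanSpace.proj (⟨0, hd⟩ : Fin d)).smulRight (EuclideanSpace.single ⟨0, hd⟩ 1)

theorem ystarL_apply (y : EuclideanSpace ℝ (Fin d)) : ystarL hd y = ystar hd y := by
  simp [ystarL, ystar, smul_smul]

def costForm : EuclideanSpace ℝ (Fin d) →L[ℝ] EuclideanSpace ℝ (Fin d) →L[ℝ] ℝ :=
  (innerSL ℝ).bilinearComp (ContinuousLinearMap.id ℝ _) (ystarL hd)

theorem costForm_apply (x y : EuclideanSpace ℝ (Fin d)) :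
    costForm hd x y = ⟪x, ystar hd y⟫ := by
  simp [costForm, ystarL_apply]

theorem costForm_flip : (costForm hd).flip = costForm hd := by
  ext x y
  simp only [ContinuousLinearMap.flip_apply, costForm_apply, inner_ystar_comm]

theorem costForm_injective : Injective (costForm hd) := by
  intro a b hab
  refine ystar_injective hd (ext_inner_left ℝ fun z => ?_)
  have := DFunLike.congr_fun hab z
  simpa only [costForm_apply, inner_ystar_comm hd _ z] using this

theorem costxy_eq_costForm {Nα Nβ : ℕ} (x : Fin Nα → EuclideanSpace ℝ (Fin d))
    (y : Fin Nβ → EuclideanSpace ℝ (Fin d)) :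
    costxy hd x y = costForm hd (∑ i, x i) (∑ j, y j) := by
  simp only [costxy, map_sum, sum_apply, costForm_apply]
  exact Finset.sum_comm

end Ystar

theorem stmt_11 {d Nα Nβ : ℕ} (hd : 0 < d) (hNα : 2 ≤ Nα)
    (Xa : Fin Nα → Set (EuclideanSpace ℝ (Fin d)))
    (Xb : Fin Nβ → Set (EuclideanSpace ℝ (Fin d)))
    (hXa : ∀ i, IsOpen (Xa i)) (hXb : ∀ j, IsOpen (Xb j))
    (p : Fin Nβ)
    (ua : Fin Nα → EuclideanSpace ℝ (Fin d) → ℝ)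
    (ub : Fin Nβ → EuclideanSpace ℝ (Fin d) → ℝ)
    (hsplit : ∀ (x : Fin Nα → EuclideanSpace ℝ (Fin d))
        (y : Fin Nβ → EuclideanSpace ℝ (Fin d)),
        (∀ i, x i ∈ Xa i) → (∀ j, y j ∈ Xb j) →
        ∑ i, ua i (x i) + ∑ j, ub j (y j) ≤ costxy hd x y)
    (x10 : EuclideanSpace ℝ (Fin d))
    (hdiff : DifferentiableAt ℝ (ua ⟨0, by omega⟩) x10) :
    Set.Subsingleton
      {q : (Fin Nα → EuclideanSpace ℝ (Fin d)) × (Fin Nβ → EuclideanSpace ℝ (Fin d)) |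
        q.1 ⟨0, by omega⟩ = x10 ∧ (∀ i, q.1 i ∈ Xa i) ∧ (∀ j, q.2 j ∈ Xb j) ∧
        DifferentiableAt ℝ (ub p) (q.2 p) ∧
        ∑ i, ua i (q.1 i) + ∑ j, ub j (q.2 j) = costxy hd q.1 q.2} := by
  have hB := costForm_injective hd
  have hu : IsSplitting (costForm hd) Xa Xb ua ub := fun x hx y hy => sub_nonneg.2 <|
    costxy_eq_costForm hd x y ▸ hsplit x y (mem_univ_pi.1 hx) (mem_univ_pi.1 hy)
  refine (hu.subsingleton_isTight hB ((costForm_flip hd).symm ▸ hB) (hXa _) (hXb p) hdiff).anti ?_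
  rintro q ⟨hq₀, hx, hy, hv, hq⟩
  refine ⟨hq₀, ⟨mem_univ_pi.2 hx, mem_univ_pi.2 hy, ?_⟩, hv⟩
  rw [splittingGap, ← costxy_eq_costForm, hq, sub_self]
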